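/- arXiv:1305.3240 — 4 statements merged into one kernel-verified Lean document; each statement's English description precedes it below -/
import Mathlib

section
/- For every vector γ ∈ ℝ^c one has γᵀ B K Bᵀ Exp(γ) = 0 if and only if Bᵀ γ = 0. -/
/-!
Writing `Bᵀ x` edgewise, the quadratic expression becomes
`∑ⱼ κⱼ (γ_{h j} - γ_{t j}) (exp γ_{h j} - exp γ_{t j})`. Since `exp` is strictly increasing,
every summand is nonnegative and vanishes exactly when `γ_{h j} = γ_{t j}`, i.e. when
`(Bᵀ γ)ⱼ = 0`.
-/

open Matrix Real

section Order

variable {α : Type*} [Ring α] [LinearOrder α] [IsStrictOrderedRing α] {f : α → α}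

lemma Monotone.sub_mul_sub_nonneg (hf : Monotone f) (x y : α) :
    0 ≤ (x - y) * (f x - f y) := by
  rcases le_total x y with h | h
  · exact mul_nonneg_of_nonpos_of_nonpos (sub_nonpos.2 h) (sub_nonpos.2 (hf h))
  · exact mul_nonneg (sub_nonneg.2 h) (sub_nonneg.2 (hf h))

lemma StrictMono.sub_mul_sub_eq_zero_iff (hf : StrictMono f) (x y : α) :
    (x - y) * (f x - f y) = 0 ↔ x = y := by
  rw [mul_eq_zero, sub_eq_zero, sub_eq_zero, hf.injective.eq_iff, or_self]

end Order

lemma Matrix.dotProduct_mul_diagonal_mul_transpose_mulVec {R m n : Type*} [CommSemiring R]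
    [Fintype m] [Fintype n] [DecidableEq n] (B : Matrix m n R) (κ : n → R) (x y : m → R) :
    x ⬝ᵥ (B * diagonal κ * Bᵀ) *ᵥ y = ∑ j, κ j * ((Bᵀ *ᵥ x) j * (Bᵀ *ᵥ y) j) := by
  rw [Matrix.mul_assoc, ← mulVec_mulVec, dotProduct_mulVec, ← mulVec_transpose,
    ← mulVec_mulVec, dotProduct]
  exact Finset.sum_congr rfl fun j _ => by rw [mulVec_diagonal]; ring

lemma Matrix.transpose_mulVec_of_incidence {R m n : Type*} [Ring R] [Fintype m]
    [DecidableEq m] {hd tl : n → m} (hht : ∀ j, hd j ≠ tl j) {B : Matrix m n R}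
    (hB : ∀ i j, B i j = if i = hd j then 1 else if i = tl j then -1 else 0) (x : m → R) :
    Bᵀ *ᵥ x = fun j => x (hd j) - x (tl j) := by
  funext j
  have hcol : (fun i => B i j) = Pi.single (hd j) 1 - Pi.single (tl j) 1 := by
    funext i
    rw [hB, Pi.sub_apply, Pi.single_apply, Pi.single_apply]
    split_ifs <;> simp_all [(hht j).symm]
  change (fun i => B i j) ⬝ᵥ x = _
  rw [hcol, sub_dotProduct, single_one_dotProduct, single_one_dotProduct]

theorem stmt_1_general (c r : ℕ)
    (hd tl : Fin r → Fin c) (hht : ∀ j, hd j ≠ tl j)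
    (B : Matrix (Fin c) (Fin r) ℝ)
    (hB : ∀ i j, B i j = if i = hd j then 1 else if i = tl j then -1 else 0)
    (κ : Fin r → ℝ) (hκ : ∀ j, 0 < κ j)
    (γ : Fin c → ℝ) :
    γ ⬝ᵥ (B * Matrix.diagonal κ * Bᵀ).mulVec (fun i => Real.exp (γ i)) = 0 ↔
      Bᵀ.mulVec γ = 0 := by
  have hBt := transpose_mulVec_of_incidence hht hB
  have hterm_nonneg : ∀ j ∈ Finset.univ,
      0 ≤ κ j * ((γ (hd j) - γ (tl j)) * (exp (γ (hd j)) - exp (γ (tl j)))) := fun j _ =>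
    mul_nonneg (hκ j).le (exp_monotone.sub_mul_sub_nonneg _ _)
  rw [dotProduct_mul_diagonal_mul_transpose_mulVec, hBt, hBt,
    Finset.sum_eq_zero_iff_of_nonneg hterm_nonneg, funext_iff]
  refine forall_congr' fun j => ?_
  rw [mul_eq_zero, or_iff_right (hκ j).ne', exp_strictMono.sub_mul_sub_eq_zero_iff, Pi.zero_apply,
    sub_eq_zero]
  simp only [Finset.mem_univ, true_implies]

/-- For every `γ ∈ ℝ^c`, `γᵀ B K Bᵀ Exp(γ) = 0` if and only if `Bᵀ γ = 0`. -/
theorem stmt_1 (c r : ℕ) (hc : 0 < c) (hr : 0 < r)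
    (hd tl : Fin r → Fin c) (hht : ∀ j, hd j ≠ tl j)
    (B : Matrix (Fin c) (Fin r) ℝ)
    (hB : ∀ i j, B i j = if i = hd j then 1 else if i = tl j then -1 else 0)
    (κ : Fin r → ℝ) (hκ : ∀ j, 0 < κ j)
    (γ : Fin c → ℝ) :
    γ ⬝ᵥ (B * Matrix.diagonal κ * Bᵀ).mulVec (fun i => Real.exp (γ i)) = 0 ↔
      Bᵀ.mulVec γ = 0 :=
  stmt_1_general c r hd tl hht B hB κ hκ γ
end

section
/- (Proposition 1) A componentwise positive vector x** ∈ ℝ^m is a thermodynamic equilibrium, i.e., satisfies Bᵀ Exp(Zᵀ Ln(x**/x*)) = 0, if and only if Sᵀ Ln(x**) = Sᵀ Ln(x*). In other words, the set of all thermodynamic equilibria is E = { x** ∈ ℝ^m_+ : Sᵀ Ln(x**) = Sᵀ Ln(x*) }. -/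
/-! `Bᵀ` maps a vector on complexes to its differences along the reactions, so
`Bᵀ (f ∘ u) = 0` iff `Bᵀ u = 0` for any injective `f`. Take `f = exp` and
`u = Zᵀ Ln(x**/x*) = Zᵀ (Ln x** - Ln x*)`, and use `Sᵀ = Bᵀ Zᵀ`. -/

open Matrix Real

section Incidence

variable {R V E : Type*} [Ring R] [Fintype V] [DecidableEq V]
  {hd tl : E → V} {B : Matrix V E R}

theorem transpose_mulVec_apply_of_incidence (hht : ∀ j, hd j ≠ tl j)
    (hB : ∀ i j, B i j = if i = hd j then 1 else if i = tl j then -1 else 0)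
    (v : V → R) (j : E) : (Bᵀ *ᵥ v) j = v (hd j) - v (tl j) := by
  have hrow : ∀ i,
      B i j * v i = (if i = hd j then v i else 0) - (if i = tl j then v i else 0) := by
    intro i
    rw [hB]
    by_cases h₁ : i = hd j
    · subst h₁; simp [hht j]
    by_cases h₂ : i = tl j
    · subst h₂; simp [h₁]
    simp [h₁, h₂]
  simp only [mulVec, dotProduct, transpose_apply, hrow, Finset.sum_sub_distrib,
    Finset.sum_ite_eq', Finset.mem_univ, if_true]

theorem transpose_mulVec_comp_eq_zero_iff_of_incidence (hht : ∀ j, hd j ≠ tl j)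
    (hB : ∀ i j, B i j = if i = hd j then 1 else if i = tl j then -1 else 0)
    {f : R → R} (hf : Function.Injective f) (u : V → R) :
    Bᵀ *ᵥ (f ∘ u) = 0 ↔ Bᵀ *ᵥ u = 0 := by
  simp only [funext_iff, transpose_mulVec_apply_of_incidence hht hB, Pi.zero_apply,
    sub_eq_zero, Function.comp_apply, hf.eq_iff]

end Incidence

theorem stmt_3_general (m c r : ℕ)
    (hd tl : Fin r → Fin c) (hht : ∀ j, hd j ≠ tl j)
    (B : Matrix (Fin c) (Fin r) ℝ)
    (hB : ∀ i j, B i j = if i = hd j then 1 else if i = tl j then -1 else 0)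
    (Z : Matrix (Fin m) (Fin c) ℝ)
    (xs : Fin m → ℝ) (hxs : ∀ i, 0 < xs i)
    (xss : Fin m → ℝ) (hxss : ∀ i, 0 < xss i) :
    Bᵀ.mulVec (fun ρ => Real.exp (Zᵀ.mulVec (fun i => Real.log (xss i / xs i)) ρ)) = 0 ↔
      (Z * B)ᵀ.mulVec (fun i => Real.log (xss i)) =
        (Z * B)ᵀ.mulVec (fun i => Real.log (xs i)) := by
  have hlog : (fun i => log (xss i / xs i)) = (fun i => log (xss i)) - fun i => log (xs i) :=
    funext fun i => log_div (hxss i).ne' (hxs i).ne'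
  rw [← sub_eq_zero (a := (Z * B)ᵀ *ᵥ _), ← mulVec_sub, ← hlog, transpose_mul,
    ← mulVec_mulVec]
  exact transpose_mulVec_comp_eq_zero_iff_of_incidence hht hB exp_injective _

/-- Proposition 1: A componentwise positive `x** ∈ ℝ^m` satisfies
`Bᵀ Exp(Zᵀ Ln(x**/x*)) = 0` if and only if `Sᵀ Ln(x**) = Sᵀ Ln(x*)`, where `S = Z B`. -/
theorem stmt_3 (m c r : ℕ) (hm : 0 < m) (hc : 0 < c) (hr : 0 < r)
    (hd tl : Fin r → Fin c) (hht : ∀ j, hd j ≠ tl j)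
    (B : Matrix (Fin c) (Fin r) ℝ)
    (hB : ∀ i j, B i j = if i = hd j then 1 else if i = tl j then -1 else 0)
    (Z : Matrix (Fin m) (Fin c) ℝ)
    (xs : Fin m → ℝ) (hxs : ∀ i, 0 < xs i)
    (xss : Fin m → ℝ) (hxss : ∀ i, 0 < xss i) :
    Bᵀ.mulVec (fun ρ => Real.exp (Zᵀ.mulVec (fun i => Real.log (xss i / xs i)) ρ)) = 0 ↔
      (Z * B)ᵀ.mulVec (fun i => Real.log (xss i)) =
        (Z * B)ᵀ.mulVec (fun i => Real.log (xs i)) :=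
  stmt_3_general m c r hd tl hht B hB Z xs hxs xss hxss
end

section
/- Every persistent positive solution of the balanced reaction network converges to a thermodynamic equilibrium: if x : [0,∞) → ℝ^m is differentiable, x(t) is componentwise positive for all t ≥ 0, x satisfies ẋ(t) = −Z B K Bᵀ Exp(Zᵀ Ln(x(t)/x*)), and liminf_{t→∞} x_i(t) > 0 for every i ∈ {1,…,m}, then there exists a componentwise positive x** ∈ ℝ^m with Sᵀ Ln(x**) = Sᵀ Ln(x*) such that x(t) → x** as t → ∞. -/
open Matrix Real Filter Topology Set InformationTheory

/-!
Along a positive solution, the relative entropy `V_a(y) = ∑ᵢ aᵢ klFun (yᵢ / aᵢ)` centred at any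
thermodynamic equilibrium `a` has derivative `-(Bᵀu)ᵀ K (Bᵀ Exp u)`, `u = Zᵀ Ln(x/x*)`. Since `exp`
is increasing, each edge contributes `κⱼ (uₕ - uₜ)(exp uₕ - exp uₜ) ≥ 0`, and the sum vanishes
exactly when `Bᵀu = 0`, i.e. at equilibria. With `a = x*` this bounds the solution from above,
persistence bounds it from below, and as `V_{x*} ≥ 0` the dissipation is not bounded away from `0`;
compactness of the resulting box gives a cluster point `x**` of the solution at which it vanishes.
Then `V_{x**}` decreases along the solution and has `0` as a cluster value, so it tends to `0`,
which forces `x → x**`.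
-/

theorem antitoneOn_Ici_of_hasDerivWithinAt_nonpos {f f' : ℝ → ℝ} {a : ℝ}
    (hf : ∀ t ∈ Ici a, HasDerivWithinAt f (f' t) (Ici a) t) (hf' : ∀ t ∈ Ioi a, f' t ≤ 0) :
    AntitoneOn f (Ici a) := by
  refine antitoneOn_of_hasDerivWithinAt_nonpos (f' := f') (convex_Ici a)
    (fun t ht => (hf t ht).continuousWithinAt) (fun t ht => ?_) (fun t ht => ?_)
  · rw [interior_Ici] at ht ⊢
    exact (hf t (Ioi_subset_Ici_self ht)).mono Ioi_subset_Ici_self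
  · rw [interior_Ici] at ht
    exact hf' t ht

theorem frequently_neg_lt_of_hasDerivWithinAt_of_nonneg {f f' : ℝ → ℝ} {a δ : ℝ}
    (hf : ∀ t ∈ Ici a, HasDerivWithinAt f (f' t) (Ici a) t) (hf₀ : ∀ t ∈ Ici a, 0 ≤ f t)
    (hδ : 0 < δ) : ∃ᶠ t in atTop, -δ < f' t := by
  rw [frequently_atTop]
  intro T
  by_contra! hle
  set b := max T a
  have hab : Ici b ⊆ Ici a := Ici_subset_Ici.2 (le_max_right T a)
  have hanti : AntitoneOn (fun t => f t + δ * t) (Ici b) := by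
    refine antitoneOn_Ici_of_hasDerivWithinAt_nonpos (f' := fun t => f' t + δ)
      (fun t ht => ((hf t (hab ht)).mono hab).add ?_) (fun t ht => ?_)
    · simpa using ((hasDerivAt_id t).const_mul δ).hasDerivWithinAt
    · linarith [hle t ((le_max_left T a).trans (le_of_lt ht))]
  have hfb : 0 ≤ f b := hf₀ b (hab self_mem_Ici)
  set t₁ := b + (f b + 1) / δ
  have hbt₁ : b ≤ t₁ := le_add_of_nonneg_right (div_nonneg (by linarith) hδ.le)
  have hdecay := hanti self_mem_Ici hbt₁ hbt₁
  have hδt₁ : δ * t₁ = δ * b + (f b + 1) := by simp only [t₁]; field_simp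
  linarith [hf₀ t₁ (hab hbt₁)]

theorem tendsto_zero_of_antitoneOn_of_mapClusterPt {f : ℝ → ℝ} {a : ℝ}
    (hf : AntitoneOn f (Ici a)) (hf₀ : ∀ t ∈ Ici a, 0 ≤ f t) (h : MapClusterPt 0 atTop f) :
    Tendsto f atTop (𝓝 0) := by
  refine tendsto_order.2 ⟨fun b hb => ?_, fun b hb => ?_⟩
  · filter_upwards [eventually_ge_atTop a] with t ht using hb.trans_le (hf₀ t ht)
  · obtain ⟨t₀, ht₀, hat₀⟩ :=
      ((h.frequently (Iio_mem_nhds hb)).and_eventually (eventually_ge_atTop a)).exists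
    filter_upwards [eventually_ge_atTop t₀] with t ht
    exact (hf hat₀ (hat₀.trans ht) ht).trans_lt ht₀

theorem MapClusterPt.eq_of_tendsto {X ι : Type*} [TopologicalSpace X] [T2Space X]
    {F : Filter ι} {u : ι → X} {x y : X} (h : MapClusterPt x F u) (hu : Tendsto u F (𝓝 y)) :
    x = y :=
  eq_of_nhds_neBot (h.clusterPt.mono hu)

theorem IsCompact.exists_mapClusterPt_eq_zero_of_frequently_lt {X : Type*} [TopologicalSpace X]
    {K : Set X} (hK : IsCompact K) {u : ℝ → X} (huK : ∀ᶠ t in atTop, u t ∈ K) {w : X → ℝ}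
    (hw : ∀ p ∈ K, ContinuousAt w p) (hw₀ : ∀ p, 0 ≤ w p)
    (hfreq : ∀ δ > 0, ∃ᶠ t in atTop, w (u t) < δ) :
    ∃ p ∈ K, MapClusterPt p atTop u ∧ w p = 0 := by
  have hs : ∀ k : ℕ, ∃ t ≥ (k : ℝ), w (u t) < 1 / (k + 1) := fun k =>
    frequently_atTop.1 (hfreq _ (by positivity)) k
  choose s hsk hws using hs
  have hs_top : Tendsto s atTop atTop := tendsto_atTop_mono hsk tendsto_natCast_atTop_atTop
  obtain ⟨p, hpK, hp⟩ := hK.exists_mapClusterPt_of_frequently (hs_top.eventually huK).frequently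
  have hw_lim : Tendsto (fun k => w (u (s k))) atTop (𝓝 0) :=
    squeeze_zero (fun k => hw₀ _) (fun k => (hws k).le) tendsto_one_div_add_atTop_nhds_zero_nat
  exact ⟨p, hpK, hp.of_comp hs_top, (hp.continuousAt_comp (hw p hpK)).eq_of_tendsto hw_lim⟩

theorem IsCompact.tendsto_nhds_of_tendsto_comp {X Y ι : Type*} [TopologicalSpace X]
    [TopologicalSpace Y] [T2Space Y] {K : Set X} (hK : IsCompact K) {l : Filter ι} {u : ι → X}
    (huK : ∀ᶠ t in l, u t ∈ K) {w : X → Y} (hw : ∀ q ∈ K, ContinuousAt w q) {y : Y}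
    (hwu : Tendsto (w ∘ u) l (𝓝 y)) {p : X} (hp : ∀ q ∈ K, w q = y → q = p) :
    Tendsto u l (𝓝 p) :=
  hK.tendsto_nhds_of_unique_mapClusterPt huK fun q hq hqu =>
    hp q hq ((hqu.continuousAt_comp (hw q hq)).eq_of_tendsto hwu)

theorem le_klFun_add {u : ℝ} (hu : 0 ≤ u) : u ≤ klFun u + (exp 1 - 1) := by
  rcases hu.eq_or_lt with rfl | hu
  · simp only [klFun_zero]
    linarith [add_one_le_exp 1]
  · have h := add_one_le_exp (1 - log u)
    rw [exp_sub, exp_log hu, le_div_iff₀ hu] at h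
    rw [klFun_apply]
    nlinarith

section RelEntropy

variable {ι : Type*}

/-- The paper's `Ln(y / a)`. -/
noncomputable def logRatio (y a : ι → ℝ) : ι → ℝ := fun i => log (y i / a i)

theorem logRatio_eq_sub {y a : ι → ℝ} (hy : ∀ i, 0 < y i) (ha : ∀ i, 0 < a i) :
    logRatio y a = (fun i => log (y i)) - fun i => log (a i) :=
  funext fun i => log_div (hy i).ne' (ha i).ne'

theorem continuousAt_logRatio {y a : ι → ℝ} (hy : ∀ i, y i ≠ 0) (ha : ∀ i, a i ≠ 0) :
    ContinuousAt (fun z => logRatio z a) y :=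
  continuousAt_pi.2 fun i =>
    ((continuousAt_apply i y).div_const (a i)).log (div_ne_zero (hy i) (ha i))

variable [Fintype ι]

noncomputable def relEntropy (a y : ι → ℝ) : ℝ := ∑ i, a i * klFun (y i / a i)

theorem relEntropy_self (a : ι → ℝ) : relEntropy a a = 0 :=
  Finset.sum_eq_zero fun i _ => by
    rcases eq_or_ne (a i) 0 with h | h <;> simp [h, klFun_one]

theorem relEntropy_nonneg {a y : ι → ℝ} (ha : ∀ i, 0 ≤ a i) (hy : ∀ i, 0 ≤ y i) :
    0 ≤ relEntropy a y :=
  Finset.sum_nonneg fun i _ => mul_nonneg (ha i) (klFun_nonneg (div_nonneg (hy i) (ha i)))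

theorem eq_of_relEntropy_eq_zero {a y : ι → ℝ} (ha : ∀ i, 0 < a i) (hy : ∀ i, 0 ≤ y i)
    (h : relEntropy a y = 0) : y = a := by
  funext i
  have hterm := (Finset.sum_eq_zero_iff_of_nonneg fun i _ =>
    mul_nonneg (ha i).le (klFun_nonneg (div_nonneg (hy i) (ha i).le))).1 h i (Finset.mem_univ i)
  rw [mul_eq_zero, or_iff_right (ha i).ne', klFun_eq_zero_iff (div_nonneg (hy i) (ha i).le),
    div_eq_one_iff_eq (ha i).ne'] at hterm
  exact hterm

theorem le_relEntropy_add {a y : ι → ℝ} (ha : ∀ i, 0 < a i) (hy : ∀ i, 0 ≤ y i) (i : ι) :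
    y i ≤ relEntropy a y + a i * (exp 1 - 1) := by
  have hyi : 0 ≤ y i / a i := div_nonneg (hy i) (ha i).le
  calc y i = a i * (y i / a i) := (mul_div_cancel₀ _ (ha i).ne').symm
    _ ≤ a i * klFun (y i / a i) + a i * (exp 1 - 1) := by
      rw [← mul_add]; exact mul_le_mul_of_nonneg_left (le_klFun_add hyi) (ha i).le
    _ ≤ relEntropy a y + a i * (exp 1 - 1) := by
      gcongr
      exact Finset.single_le_sum (f := fun i => a i * klFun (y i / a i))
        (fun j _ => mul_nonneg (ha j).le (klFun_nonneg (div_nonneg (hy j) (ha j).le)))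
        (Finset.mem_univ i)

theorem continuous_relEntropy (a : ι → ℝ) : Continuous (relEntropy a) := by
  unfold relEntropy; fun_prop

theorem HasDerivWithinAt.relEntropy {x : ℝ → ι → ℝ} {x' : ι → ℝ} {s : Set ℝ} {t : ℝ}
    (hx : HasDerivWithinAt x x' s t) {a : ι → ℝ} (ha : ∀ i, a i ≠ 0) (hxt : ∀ i, x t i ≠ 0) :
    HasDerivWithinAt (fun τ => relEntropy a (x τ)) (logRatio (x t) a ⬝ᵥ x') s t := by
  refine HasDerivWithinAt.fun_sum fun i _ => ?_
  have hi := ((hasDerivAt_klFun (div_ne_zero (hxt i) (ha i))).comp_hasDerivWithinAt t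
    ((hasDerivWithinAt_pi.1 hx i).div_const (a i))).const_mul (a i)
  refine hi.congr_deriv ?_
  simp only [logRatio]
  field_simp [ha i]

end RelEntropy

section Dissipation

variable {C R : Type*} [Fintype C] [Fintype R] [DecidableEq R]

noncomputable def dissipation (B : Matrix C R ℝ) (κ : R → ℝ) (u : C → ℝ) : ℝ :=
  Bᵀ *ᵥ u ⬝ᵥ diagonal κ *ᵥ Bᵀ *ᵥ fun ρ => exp (u ρ)

theorem continuous_dissipation (B : Matrix C R ℝ) (κ : R → ℝ) : Continuous (dissipation B κ) := by
  unfold dissipation; fun_prop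

end Dissipation

section IncidenceMatrix

variable {C R : Type*} [DecidableEq C]

def IsIncidenceMatrix (hd tl : R → C) (B : Matrix C R ℝ) : Prop :=
  (∀ j, hd j ≠ tl j) ∧ ∀ i j, B i j = if i = hd j then 1 else if i = tl j then -1 else 0

variable [Fintype C] {hd tl : R → C} {B : Matrix C R ℝ}

theorem IsIncidenceMatrix.transpose_mulVec_apply (hB : IsIncidenceMatrix hd tl B) (v : C → ℝ)
    (j : R) : (Bᵀ *ᵥ v) j = v (hd j) - v (tl j) := by
  simp [mulVec, dotProduct, hB.2, ite_mul, Finset.sum_ite, Finset.filter_eq', (hB.1 j).symm,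
    sub_eq_add_neg]

variable [Fintype R] [DecidableEq R]

theorem IsIncidenceMatrix.dissipation_eq_sum (hB : IsIncidenceMatrix hd tl B) (κ : R → ℝ)
    (u : C → ℝ) : dissipation B κ u =
      ∑ j, κ j * ((u (hd j) - u (tl j)) * (exp (u (hd j)) - exp (u (tl j)))) := by
  simp only [dissipation, dotProduct, mulVec_diagonal, hB.transpose_mulVec_apply]
  exact Finset.sum_congr rfl fun j _ => by ring

theorem sub_mul_exp_sub_nonneg (a b : ℝ) : 0 ≤ (a - b) * (exp a - exp b) :=
  (monotone_id.monovary exp_monotone).sub_mul_sub_nonneg b a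

theorem IsIncidenceMatrix.dissipation_nonneg (hB : IsIncidenceMatrix hd tl B) {κ : R → ℝ}
    (hκ : ∀ j, 0 ≤ κ j) (u : C → ℝ) : 0 ≤ dissipation B κ u := by
  rw [hB.dissipation_eq_sum]
  exact Finset.sum_nonneg fun j _ => mul_nonneg (hκ j) (sub_mul_exp_sub_nonneg _ _)

theorem IsIncidenceMatrix.transpose_mulVec_eq_zero_of_dissipation_eq_zero
    (hB : IsIncidenceMatrix hd tl B) {κ : R → ℝ} (hκ : ∀ j, 0 < κ j) {u : C → ℝ}
    (h : dissipation B κ u = 0) : Bᵀ *ᵥ u = 0 := by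
  rw [hB.dissipation_eq_sum, Finset.sum_eq_zero_iff_of_nonneg fun j _ =>
    mul_nonneg (hκ j).le (sub_mul_exp_sub_nonneg _ _)] at h
  funext j
  rw [hB.transpose_mulVec_apply, Pi.zero_apply, sub_eq_zero]
  obtain h | h :=
    mul_eq_zero.1 ((mul_eq_zero.1 (h j (Finset.mem_univ j))).resolve_left (hκ j).ne')
  · exact sub_eq_zero.1 h
  · exact exp_injective (sub_eq_zero.1 h)

end IncidenceMatrix

section MassAction

variable {M C R : Type*} [Fintype M] [Fintype C] [Fintype R] [DecidableEq R]
  {Z : Matrix M C ℝ} {B : Matrix C R ℝ} {κ : R → ℝ} {xs : M → ℝ}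

variable (xs) in
def IsThermodynamicEquilibrium {R : Type*} (S : Matrix M R ℝ) (a : M → ℝ) : Prop :=
  (∀ i, 0 < a i) ∧ Sᵀ *ᵥ (fun i => log (a i)) = Sᵀ *ᵥ fun i => log (xs i)

variable (Z B κ xs) in
noncomputable def massActionField (y : M → ℝ) : M → ℝ :=
  -((Z * B * diagonal κ * Bᵀ) *ᵥ fun ρ => exp ((Zᵀ *ᵥ logRatio y xs) ρ))

theorem logRatio_dotProduct_massActionField {a y : M → ℝ} (hxs : ∀ i, 0 < xs i)
    (ha : IsThermodynamicEquilibrium xs (Z * B) a) (hy : ∀ i, 0 < y i) :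
    logRatio y a ⬝ᵥ massActionField Z B κ xs y = -dissipation B κ (Zᵀ *ᵥ logRatio y xs) := by
  have hshift : (Z * B)ᵀ *ᵥ logRatio y a = (Z * B)ᵀ *ᵥ logRatio y xs := by
    rw [logRatio_eq_sub hy ha.1, logRatio_eq_sub hy hxs, mulVec_sub, mulVec_sub, ha.2]
  simp only [transpose_mul, ← mulVec_mulVec] at hshift
  simp only [massActionField, dissipation, dotProduct_neg, ← mulVec_mulVec, dotProduct_mulVec,
    ← mulVec_transpose, hshift]

theorem continuousAt_dissipation_logRatio {y : M → ℝ} (hxs : ∀ i, 0 < xs i)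
    (hy : ∀ i, 0 < y i) : ContinuousAt (fun z => dissipation B κ (Zᵀ *ᵥ logRatio z xs)) y := by
  have := continuousAt_logRatio (fun i => (hy i).ne') fun i => (hxs i).ne'
  have := continuous_dissipation B κ
  fun_prop

theorem isThermodynamicEquilibrium_of_dissipation_eq_zero [DecidableEq C] {hd tl : R → C}
    (hB : IsIncidenceMatrix hd tl B) (hκ : ∀ j, 0 < κ j) (hxs : ∀ i, 0 < xs i) {y : M → ℝ}
    (hy : ∀ i, 0 < y i) (h : dissipation B κ (Zᵀ *ᵥ logRatio y xs) = 0) :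
    IsThermodynamicEquilibrium xs (Z * B) y := by
  have := hB.transpose_mulVec_eq_zero_of_dissipation_eq_zero hκ h
  refine ⟨hy, ?_⟩
  rwa [logRatio_eq_sub hy hxs, mulVec_mulVec, ← transpose_mul, mulVec_sub, sub_eq_zero] at this

variable (Z B κ xs) in
def IsPositiveSolution (x : ℝ → M → ℝ) : Prop :=
  (∀ t ∈ Ici (0 : ℝ), ∀ i, 0 < x t i) ∧
    ∀ t ∈ Ici (0 : ℝ), HasDerivWithinAt x (massActionField Z B κ xs (x t)) (Ici 0) t

variable {x : ℝ → M → ℝ}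

theorem IsPositiveSolution.hasDerivWithinAt_relEntropy (hx : IsPositiveSolution Z B κ xs x)
    (hxs : ∀ i, 0 < xs i) {a : M → ℝ} (ha : IsThermodynamicEquilibrium xs (Z * B) a)
    {t : ℝ} (ht : t ∈ Ici 0) :
    HasDerivWithinAt (fun τ => relEntropy a (x τ))
      (-dissipation B κ (Zᵀ *ᵥ logRatio (x t) xs)) (Ici 0) t := by
  rw [← logRatio_dotProduct_massActionField hxs ha (hx.1 t ht)]
  exact (hx.2 t ht).relEntropy (fun i => (ha.1 i).ne') fun i => (hx.1 t ht i).ne'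

theorem IsPositiveSolution.antitoneOn_relEntropy [DecidableEq C]
    (hx : IsPositiveSolution Z B κ xs x) {hd tl : R → C} (hB : IsIncidenceMatrix hd tl B)
    (hκ : ∀ j, 0 ≤ κ j) (hxs : ∀ i, 0 < xs i) {a : M → ℝ}
    (ha : IsThermodynamicEquilibrium xs (Z * B) a) :
    AntitoneOn (fun t => relEntropy a (x t)) (Ici 0) :=
  antitoneOn_Ici_of_hasDerivWithinAt_nonpos
    (fun _ ht => hx.hasDerivWithinAt_relEntropy hxs ha ht)
    fun _ _ => neg_nonpos.2 (hB.dissipation_nonneg hκ _)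

theorem IsPositiveSolution.frequently_dissipation_lt (hx : IsPositiveSolution Z B κ xs x)
    (hxs : ∀ i, 0 < xs i) {δ : ℝ} (hδ : 0 < δ) :
    ∃ᶠ t in atTop, dissipation B κ (Zᵀ *ᵥ logRatio (x t) xs) < δ :=
  (frequently_neg_lt_of_hasDerivWithinAt_of_nonneg
    (fun _ ht => hx.hasDerivWithinAt_relEntropy hxs ⟨hxs, rfl⟩ ht)
    (fun t ht => relEntropy_nonneg (fun i => (hxs i).le) fun i => (hx.1 t ht i).le) hδ).mono
    fun _ => neg_lt_neg_iff.1

end MassAction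

theorem stmt_9_general (m c r : ℕ)
    (hd tl : Fin r → Fin c) (hht : ∀ j, hd j ≠ tl j)
    (B : Matrix (Fin c) (Fin r) ℝ)
    (hB : ∀ i j, B i j = if i = hd j then 1 else if i = tl j then -1 else 0)
    (κ : Fin r → ℝ) (hκ : ∀ j, 0 < κ j)
    (Z : Matrix (Fin m) (Fin c) ℝ)
    (xs : Fin m → ℝ) (hxs : ∀ i, 0 < xs i)
    (x : ℝ → Fin m → ℝ) (hpos : ∀ t ∈ Set.Ici (0 : ℝ), ∀ i, 0 < x t i)
    (hode : ∀ t ∈ Set.Ici (0 : ℝ), HasDerivWithinAt x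
      (-(Z * B * Matrix.diagonal κ * Bᵀ).mulVec
        (fun ρ => Real.exp (Zᵀ.mulVec (fun i => Real.log (x t i / xs i)) ρ)))
      (Set.Ici (0 : ℝ)) t)
    (hpersist : ∀ i, ∃ ε > (0 : ℝ), ∀ᶠ t in atTop, ε ≤ x t i) :
    ∃ xss : Fin m → ℝ, (∀ i, 0 < xss i) ∧
      (Z * B)ᵀ.mulVec (fun i => Real.log (xss i)) =
        (Z * B)ᵀ.mulVec (fun i => Real.log (xs i)) ∧
      Tendsto x atTop (𝓝 xss) := by
  have hinc : IsIncidenceMatrix hd tl B := ⟨hht, hB⟩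
  have hx : IsPositiveSolution Z B κ xs x := ⟨hpos, hode⟩
  have hκ₀ : ∀ j, 0 ≤ κ j := fun j => (hκ j).le
  choose ε hε hlow using hpersist
  set K : Set (Fin m → ℝ) :=
    univ.pi fun i => Icc (ε i) (relEntropy xs (x 0) + xs i * (exp 1 - 1))
  have hK : IsCompact K := isCompact_univ_pi fun _ => isCompact_Icc
  have hKpos : ∀ q ∈ K, ∀ i, 0 < q i := fun q hq i => (hε i).trans_le (hq i (mem_univ i)).1
  have hxK : ∀ᶠ t in atTop, x t ∈ K := by
    filter_upwards [eventually_all.2 hlow, eventually_ge_atTop 0] with t hεt ht i _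
    refine ⟨hεt i, (le_relEntropy_add hxs (fun i => (hpos t ht i).le) i).trans ?_⟩
    gcongr
    exact hx.antitoneOn_relEntropy hinc hκ₀ hxs ⟨hxs, rfl⟩ self_mem_Ici ht ht
  obtain ⟨p, hpK, hpx, hp⟩ := hK.exists_mapClusterPt_eq_zero_of_frequently_lt hxK
    (fun q hq => continuousAt_dissipation_logRatio hxs (hKpos q hq))
    (fun _ => hinc.dissipation_nonneg hκ₀ _)
    (fun _ hδ => hx.frequently_dissipation_lt hxs hδ)
  have hpeq := isThermodynamicEquilibrium_of_dissipation_eq_zero hinc hκ hxs (hKpos p hpK) hp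
  refine ⟨p, hpeq.1, hpeq.2, ?_⟩
  have hVp : Tendsto (fun t => relEntropy p (x t)) atTop (𝓝 0) :=
    tendsto_zero_of_antitoneOn_of_mapClusterPt
      (hx.antitoneOn_relEntropy hinc hκ₀ hxs hpeq)
      (fun t ht => relEntropy_nonneg (fun i => (hKpos p hpK i).le) fun i => (hpos t ht i).le)
      (relEntropy_self p ▸ hpx.continuousAt_comp (continuous_relEntropy p).continuousAt)
  exact hK.tendsto_nhds_of_tendsto_comp hxK (fun _ _ => (continuous_relEntropy p).continuousAt)
    hVp fun q hq hq₀ => eq_of_relEntropy_eq_zero (hKpos p hpK) (fun i => (hKpos q hq i).le) hq₀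

/-- Every persistent componentwise positive solution of
`ẋ = −Z B K Bᵀ Exp(Zᵀ Ln(x/x*))` on `[0,∞)` converges to a thermodynamic equilibrium,
i.e. to some `x** > 0` with `Sᵀ Ln(x**) = Sᵀ Ln(x*)` (`S = Z B`).  Persistence
(`liminf_{t→∞} x_i(t) > 0`) is expressed as an eventual positive lower bound. -/
theorem stmt_9 (m c r : ℕ) (hm : 0 < m) (hc : 0 < c) (hr : 0 < r)
    (hd tl : Fin r → Fin c) (hht : ∀ j, hd j ≠ tl j)
    (B : Matrix (Fin c) (Fin r) ℝ)
    (hB : ∀ i j, B i j = if i = hd j then 1 else if i = tl j then -1 else 0)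
    (κ : Fin r → ℝ) (hκ : ∀ j, 0 < κ j)
    (Z : Matrix (Fin m) (Fin c) ℝ)
    (xs : Fin m → ℝ) (hxs : ∀ i, 0 < xs i)
    (x : ℝ → Fin m → ℝ) (hpos : ∀ t ∈ Set.Ici (0 : ℝ), ∀ i, 0 < x t i)
    (hode : ∀ t ∈ Set.Ici (0 : ℝ), HasDerivWithinAt x
      (-(Z * B * Matrix.diagonal κ * Bᵀ).mulVec
        (fun ρ => Real.exp (Zᵀ.mulVec (fun i => Real.log (x t i / xs i)) ρ)))
      (Set.Ici (0 : ℝ)) t)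
    (hpersist : ∀ i, ∃ ε > (0 : ℝ), ∀ᶠ t in atTop, ε ≤ x t i) :
    ∃ xss : Fin m → ℝ, (∀ i, 0 < xss i) ∧
      (Z * B)ᵀ.mulVec (fun i => Real.log (xss i)) =
        (Z * B)ᵀ.mulVec (fun i => Real.log (xs i)) ∧
      Tendsto x atTop (𝓝 xss) :=
  stmt_9_general m c r hd tl hht B hB κ hκ Z xs hxs x hpos hode hpersist
end

section
/- The total free energy decreases along every positive solution of the closed compartmental reaction–diffusion model: if X = (x^1,…,x^N) : [0,∞) → ℝ^{mN} is differentiable, all compartments of X(t) are componentwise positive for all t ≥ 0, and X satisfies ẋ^k_i(t) = −(1/m0_k) Σ_{j=1}^{N_e} D_{j k} m1_j r_{j,i}(X(t)) (Σ_{l=1}^N D_{j l} x^l_i(t)/x*_i) + f_i(x^k(t)) for all k and i, then the function t ↦ G_d(X(t)) = Σ_{k=1}^N m0_k G(x^k(t)) is differentiable with nonpositive derivative at every t ≥ 0. -/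
/-!
Differentiating termwise, `d/dt G_d(X) = ∑ₖ m0ₖ ⟪Ln(xᵏ/x*), ẋᵏ⟫`. The mass `m0ₖ` cancels the
`1/m0ₖ` of the diffusion term, which for each species `i`, with `u = x_i/x*_i`, becomes
`-⟪Ln u, Dᵀ W D u⟫` for `W = diag(m1ⱼ r_{j,i}) ≥ 0`; the reaction term of compartment `k` is
`-⟪γ, B K Bᵀ Exp γ⟫` for `γ = Zᵀ Ln(xᵏ/x*)`. Both are quadratic forms `⟪a, B K Bᵀ b⟫` of an
incidence matrix `B`, `K ≥ 0`, evaluated on similarly ordered vectors `a`, `b`: edge by edge this is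
`∑ₑ κₑ (a_p - a_q)(b_p - b_q) ≥ 0`, since `log` and `exp` are monotone.
-/

open Matrix Real

section IncidenceQuadraticForm

variable {V E : Type*} [DecidableEq V]

theorem eq_single_sub_single {d : V → ℝ} {p q : V} (hpq : p ≠ q)
    (hp : d p = 1) (hq : d q = -1) (h0 : ∀ l, l ≠ p → l ≠ q → d l = 0) :
    d = Pi.single p 1 - Pi.single q 1 := by
  ext l
  rw [Pi.sub_apply, Pi.single_apply, Pi.single_apply]
  split_ifs <;> simp_all

theorem transpose_apply_eq_single_sub_single {B : Matrix V E ℝ} {hd tl : E → V}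
    (hht : ∀ e, hd e ≠ tl e)
    (hB : ∀ i e, B i e = if i = hd e then 1 else if i = tl e then -1 else 0) (e : E) :
    Bᵀ e = Pi.single (hd e) 1 - Pi.single (tl e) 1 :=
  eq_single_sub_single (hht e) (by simp [hB]) (by simp [hB, (hht e).symm])
    fun i h1 h2 => by simp [hB, h1, h2]

theorem transpose_mulVec_apply_of_col_eq [Fintype V] {B : Matrix V E ℝ} {e : E} {p q : V}
    (hcol : Bᵀ e = Pi.single p 1 - Pi.single q 1) (a : V → ℝ) :
    (Bᵀ *ᵥ a) e = a p - a q := by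
  rw [mulVec, hcol, sub_dotProduct, single_one_dotProduct, single_one_dotProduct]

theorem dotProduct_incidence_mulVec_nonneg [Fintype V] [Fintype E] [DecidableEq E]
    (B : Matrix V E ℝ)
    (hB : ∀ e, ∃ p q, Bᵀ e = Pi.single p 1 - Pi.single q 1)
    {κ : E → ℝ} (hκ : ∀ e, 0 ≤ κ e) {a b : V → ℝ} (hab : Monovary a b) :
    0 ≤ a ⬝ᵥ (B * diagonal κ * Bᵀ) *ᵥ b := by
  rw [← mulVec_mulVec, ← mulVec_mulVec, dotProduct_mulVec, ← mulVec_transpose]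
  refine Finset.sum_nonneg fun e _ => ?_
  obtain ⟨p, q, hcol⟩ := hB e
  rw [mulVec_diagonal, transpose_mulVec_apply_of_col_eq hcol,
    transpose_mulVec_apply_of_col_eq hcol]
  nlinarith [hκ e, hab.sub_mul_sub_nonneg q p]

theorem sum_mul_sum_incidence_mul_nonneg [Fintype V] [Fintype E] (D : Matrix E V ℝ)
    (hD : ∀ e, ∃ p q, D e = Pi.single p 1 - Pi.single q 1)
    {w : E → ℝ} (hw : ∀ e, 0 ≤ w e) {a b : V → ℝ} (hab : Monovary a b) :
    0 ≤ ∑ k, a k * ∑ e, D e k * w e * ∑ l, D e l * b l := by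
  classical
  convert dotProduct_incidence_mulVec_nonneg Dᵀ hD hw hab using 1
  simp only [Finset.mul_sum, mul_assoc, dotProduct, mulVec, diagonal, transpose_transpose,
    Matrix.mul_apply, transpose_apply, of_apply, mul_ite, mul_zero, Finset.sum_ite_eq',
    Finset.mem_univ, ↓reduceIte, Finset.sum_mul]
  exact Finset.sum_congr rfl fun _ _ => Finset.sum_comm

end IncidenceQuadraticForm

theorem dotProduct_massAction_nonneg {S C R : Type*} [Fintype S] [Fintype C] [Fintype R]
    [DecidableEq C] [DecidableEq R] (B : Matrix C R ℝ)
    (hB : ∀ e, ∃ p q, Bᵀ e = Pi.single p 1 - Pi.single q 1)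
    {κ : R → ℝ} (hκ : ∀ e, 0 ≤ κ e) (Z : Matrix S C ℝ) (L : S → ℝ) :
    0 ≤ L ⬝ᵥ (Z * B * diagonal κ * Bᵀ) *ᵥ fun ρ => exp ((Zᵀ *ᵥ L) ρ) := by
  rw [Matrix.mul_assoc, Matrix.mul_assoc, ← Matrix.mul_assoc B, ← mulVec_mulVec,
    dotProduct_mulVec, ← mulVec_transpose]
  exact dotProduct_incidence_mulVec_nonneg B hB hκ fun _ _ h => (exp_lt_exp.1 h).le

theorem hasDerivAt_mul_log_div_add_sub {a b : ℝ} (ha : a ≠ 0) (hb : b ≠ 0) :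
    HasDerivAt (fun y => y * log (y / b) + b - y) (log (a / b)) a := by
  have hlog : HasDerivAt (fun y => log (y / b)) (1 / b / (a / b)) a :=
    ((hasDerivAt_id a).div_const b).log (div_ne_zero ha hb)
  refine ((((hasDerivAt_id a).fun_mul hlog).add_const b).fun_sub (hasDerivAt_id a)).congr_deriv ?_
  simp only [id_eq]
  field_simp
  ring

theorem HasDerivWithinAt.sum_mul_sum_gibbs {ι σ : Type*} [Fintype ι] [Fintype σ]
    {x : ℝ → ι → σ → ℝ} {v : ι → σ → ℝ} {s : Set ℝ} {t : ℝ}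
    (hx : ∀ k i, HasDerivWithinAt (fun s => x s k i) (v k i) s t) (hxt : ∀ k i, x t k i ≠ 0)
    (xs : σ → ℝ) (hxs : ∀ i, xs i ≠ 0) (m0 : ι → ℝ) :
    HasDerivWithinAt
      (fun s => ∑ k, m0 k * ∑ i, (x s k i * Real.log (x s k i / xs i) + xs i - x s k i))
      (∑ k, m0 k * ∑ i, Real.log (x t k i / xs i) * v k i) s t := by
  refine .fun_sum fun k _ => .const_mul _ (.fun_sum fun i _ => ?_)
  exact (hasDerivAt_mul_log_div_add_sub (hxt k i) (hxs i)).comp_hasDerivWithinAt t (hx k i)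

theorem stmt_13_general (m c r : ℕ)
    (hd tl : Fin r → Fin c) (hht : ∀ j, hd j ≠ tl j)
    (B : Matrix (Fin c) (Fin r) ℝ)
    (hB : ∀ i j, B i j = if i = hd j then 1 else if i = tl j then -1 else 0)
    (κ : Fin r → ℝ) (hκ : ∀ j, 0 < κ j)
    (Z : Matrix (Fin m) (Fin c) ℝ)
    (xs : Fin m → ℝ) (hxs : ∀ i, 0 < xs i)
    (N Ne : ℕ)
    (D : Matrix (Fin Ne) (Fin N) ℝ)
    (hD : ∀ j, ∃ p q : Fin N, p ≠ q ∧ D j p = 1 ∧ D j q = -1 ∧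
      ∀ l, l ≠ p → l ≠ q → D j l = 0)
    (m0 : Fin N → ℝ) (hm0 : ∀ k, 0 < m0 k)
    (m1 : Fin Ne → ℝ) (hm1 : ∀ j, 0 < m1 j)
    (rr : Fin Ne → Fin m → (Fin N → Fin m → ℝ) → ℝ)
    (α : ℝ) (hα : 0 < α) (hrα : ∀ j i X, α ≤ rr j i X)
    (x : ℝ → Fin N → Fin m → ℝ)
    (hpos : ∀ t ∈ Set.Ici (0 : ℝ), ∀ k i, 0 < x t k i)
    (hode : ∀ t ∈ Set.Ici (0 : ℝ), ∀ k i,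
      HasDerivWithinAt (fun s => x s k i)
        (-(1 / m0 k) * ∑ j, D j k * m1 j * rr j i (x t) * (∑ l, D j l * (x t l i / xs i))
          + (-(Z * B * Matrix.diagonal κ * Bᵀ).mulVec
              (fun ρ => Real.exp (Zᵀ.mulVec (fun i' => Real.log (x t k i' / xs i')) ρ))) i)
        (Set.Ici (0 : ℝ)) t) :
    ∀ t ∈ Set.Ici (0 : ℝ), ∃ d : ℝ, d ≤ 0 ∧
      HasDerivWithinAt
        (fun s => ∑ k, m0 k * ∑ i, (x s k i * Real.log (x s k i / xs i) + xs i - x s k i))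
        d (Set.Ici (0 : ℝ)) t := by
  intro t ht
  refine ⟨_, ?_, .sum_mul_sum_gibbs (hode t ht) (fun k i => (hpos t ht k i).ne') xs
    (fun i => (hxs i).ne') m0⟩
  set L : Fin N → Fin m → ℝ := fun k i => Real.log (x t k i / xs i)
  set R := Z * B * diagonal κ * Bᵀ
  have hdiffusion : ∀ i, 0 ≤ ∑ k, L k i * ∑ j, D j k * (m1 j * rr j i (x t)) *
      ∑ l, D j l * (x t l i / xs i) := by
    refine fun i => sum_mul_sum_incidence_mul_nonneg D (fun j => ?_)
      (fun j => (mul_pos (hm1 j) (hα.trans_le (hrα j i (x t)))).le)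
      fun k l h => log_le_log (div_pos (hpos t ht k i) (hxs i)) h.le
    obtain ⟨p, q, hpq, hp, hq, h0⟩ := hD j
    exact ⟨p, q, eq_single_sub_single hpq hp hq h0⟩
  have hreaction : ∀ k, 0 ≤ L k ⬝ᵥ R *ᵥ fun ρ => exp ((Zᵀ *ᵥ L k) ρ) := fun k =>
    dotProduct_massAction_nonneg B (fun j => ⟨_, _, transpose_apply_eq_single_sub_single hht hB j⟩)
      (fun j => (hκ j).le) Z (L k)
  calc
    _ = -(∑ i, ∑ k, L k i * ∑ j, D j k * (m1 j * rr j i (x t)) * ∑ l, D j l * (x t l i / xs i))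
        - ∑ k, m0 k * (L k ⬝ᵥ R *ᵥ fun ρ => exp ((Zᵀ *ᵥ L k) ρ)) := by
      rw [sub_eq_add_neg, Finset.sum_comm, ← Finset.sum_neg_distrib, ← Finset.sum_neg_distrib]
      simp only [mul_add, Finset.sum_add_distrib, Finset.mul_sum]
      congr 1 <;> refine Finset.sum_congr rfl fun k _ => ?_
      · rw [← Finset.sum_neg_distrib]
        refine Finset.sum_congr rfl fun i _ => ?_
        simp only [L, mul_assoc]
        field_simp [(hm0 k).ne']
        simp only [Finset.sum_neg_distrib]
      · simp only [dotProduct, Pi.neg_apply, mul_neg, Finset.sum_neg_distrib, Finset.mul_sum, L]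
    _ ≤ 0 := by
      have := Finset.sum_nonneg fun i (_ : i ∈ Finset.univ) => hdiffusion i
      have := Finset.sum_nonneg fun k (_ : k ∈ Finset.univ) =>
        mul_nonneg (hm0 k).le (hreaction k)
      linarith

/-- Along every componentwise positive solution of the closed
compartmental reaction–diffusion model, the total free energy
`G_d(X(t)) = ∑_k m0_k G(x^k(t))`, with `G(x) = ∑ i (x_i log(x_i/x*_i) + x*_i − x_i)`,
is differentiable with nonpositive derivative at every `t ≥ 0`. -/
theorem stmt_13 (m c r : ℕ) (hm : 0 < m) (hc : 0 < c) (hr : 0 < r)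
    (hd tl : Fin r → Fin c) (hht : ∀ j, hd j ≠ tl j)
    (B : Matrix (Fin c) (Fin r) ℝ)
    (hB : ∀ i j, B i j = if i = hd j then 1 else if i = tl j then -1 else 0)
    (κ : Fin r → ℝ) (hκ : ∀ j, 0 < κ j)
    (Z : Matrix (Fin m) (Fin c) ℝ)
    (xs : Fin m → ℝ) (hxs : ∀ i, 0 < xs i)
    (N Ne : ℕ) (hN : 0 < N) (hNe : 0 < Ne)
    (D : Matrix (Fin Ne) (Fin N) ℝ)
    (hD : ∀ j, ∃ p q : Fin N, p ≠ q ∧ D j p = 1 ∧ D j q = -1 ∧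
      ∀ l, l ≠ p → l ≠ q → D j l = 0)
    (m0 : Fin N → ℝ) (hm0 : ∀ k, 0 < m0 k)
    (m1 : Fin Ne → ℝ) (hm1 : ∀ j, 0 < m1 j)
    (rr : Fin Ne → Fin m → (Fin N → Fin m → ℝ) → ℝ)
    (hrcont : ∀ j i, Continuous (rr j i))
    (α : ℝ) (hα : 0 < α) (hrα : ∀ j i X, α ≤ rr j i X)
    (x : ℝ → Fin N → Fin m → ℝ)
    (hpos : ∀ t ∈ Set.Ici (0 : ℝ), ∀ k i, 0 < x t k i)
    (hode : ∀ t ∈ Set.Ici (0 : ℝ), ∀ k i,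
      HasDerivWithinAt (fun s => x s k i)
        (-(1 / m0 k) * ∑ j, D j k * m1 j * rr j i (x t) * (∑ l, D j l * (x t l i / xs i))
          + (-(Z * B * Matrix.diagonal κ * Bᵀ).mulVec
              (fun ρ => Real.exp (Zᵀ.mulVec (fun i' => Real.log (x t k i' / xs i')) ρ))) i)
        (Set.Ici (0 : ℝ)) t) :
    ∀ t ∈ Set.Ici (0 : ℝ), ∃ d : ℝ, d ≤ 0 ∧
      HasDerivWithinAt
        (fun s => ∑ k, m0 k * ∑ i, (x s k i * Real.log (x s k i / xs i) + xs i - x s k i))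
        d (Set.Ici (0 : ℝ)) t :=
  stmt_13_general m c r hd tl hht B hB κ hκ Z xs hxs N Ne D hD m0 hm0 m1 hm1 rr α hα hrα x hpos hode
end
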